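/- arXiv:1609.03848 — 5 statements merged into one kernel-verified Lean document; each statement's English description precedes it below -/
import Mathlib

section
/- Let a¹, a², a³: ℤ → ℂ be sequences in h¹ (weighted ℓ² with weight (1+p²)). Define R_p = Σ_{(p,q,r,s)∈Γ₀} a¹_q · conj(a²_r) · a³_s. Then there exists a constant C > 0 (independent of the sequences) such that ‖R‖_{ℓ²} ≤ C · min over permutations σ of {1,2,3} of ‖a^{σ(1)}‖_{ℓ²} · ‖a^{σ(2)}‖_{h¹} · ‖a^{σ(3)}‖_{h¹}. -/
open scoped ComplexConjugate

/-- The reduced resonant nonlinearity: `R f g h p = ∑_{(p,q,r,s)∈Γ₀} f_q conj(g_r) h_s`,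
where `Γ₀ = {(p,q,r,s) : {p,r} = {q,s}}`. -/
noncomputable def Rop (f g h : ℤ → ℂ) (p : ℤ) : ℂ :=
  ∑' x : {x : ℤ × ℤ × ℤ // ({p, x.2.1} : Set ℤ) = {x.1, x.2.2}},
    f x.val.1 * conj (g x.val.2.1) * h x.val.2.2

/-- The `ℓ²` norm of a sequence. -/
noncomputable def l2norm (a : ℤ → ℂ) : ℝ := Real.sqrt (∑' p : ℤ, ‖a p‖ ^ 2)

/-- The `h¹` norm of a sequence. -/
noncomputable def h1norm (a : ℤ → ℂ) : ℝ :=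
  Real.sqrt (∑' p : ℤ, (1 + (p : ℝ) ^ 2) * ‖a p‖ ^ 2)

/-! For fixed `p` the constraint `{p, r} = {q, s}` forces `(q, r, s)` to be `(p, r, r)` or
`(r, r, p)`, the two families meeting only at `(p, p, p)`. Hence
`R = ⟪a², a³⟫ a¹ + ⟪a², a¹⟫ a³ - a¹ conj(a²) a³`, and each of the three terms has `ℓ²` norm at
most `‖a¹‖ ‖a²‖ ‖a³‖` (Cauchy–Schwarz, and `sup ≤ ℓ²` for the diagonal term). So `R` obeys a
purely `ℓ²` trilinear bound with constant `3`, and the `h¹` norms only enter through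
`‖·‖_{ℓ²} ≤ ‖·‖_{h¹}`. -/

open scoped InnerProductSpace

theorem HasSum.indicator_union {α β : Type*} [AddCommGroup α] [TopologicalSpace α]
    [IsTopologicalAddGroup α] {f : β → α} {s t : Set β} {a b c : α}
    (hs : HasSum (s.indicator f) a) (ht : HasSum (t.indicator f) b)
    (hst : HasSum ((s ∩ t).indicator f) c) :
    HasSum ((s ∪ t).indicator f) (a + b - c) := by
  convert (hs.add ht).sub hst using 1
  funext x
  exact eq_sub_of_add_eq (Set.indicator_union_add_inter_apply f s t x)

def resonantFiber (p : ℤ) : Set (ℤ × ℤ × ℤ) := {x | ({p, x.2.1} : Set ℤ) = {x.1, x.2.2}}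

theorem resonantFiber_eq_union (p : ℤ) :
    resonantFiber p =
      Set.range (fun r => (p, r, r)) ∪ Set.range (fun r => (r, r, p)) := by
  ext ⟨q, r, s⟩
  simp only [resonantFiber, Set.mem_ofPred_eq, Set.pair_eq_pair_iff, Set.mem_union, Set.mem_range,
    Prod.mk.injEq]
  aesop

theorem range_inter_range_eq_singleton (p : ℤ) :
    Set.range (fun r => (p, r, r)) ∩ Set.range (fun r => (r, r, p)) = {(p, p, p)} := by
  ext ⟨q, r, s⟩
  simp only [Set.mem_inter_iff, Set.mem_range, Prod.mk.injEq, Set.mem_singleton_iff]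
  aesop

theorem Rop_eq {a1 a2 a3 : ℤ → ℂ} (h23 : Summable fun r => conj (a2 r) * a3 r)
    (h12 : Summable fun r => a1 r * conj (a2 r)) (p : ℤ) :
    Rop a1 a2 a3 p =
      a1 p * ∑' r, conj (a2 r) * a3 r + (∑' r, a1 r * conj (a2 r)) * a3 p
        - a1 p * conj (a2 p) * a3 p := by
  set F : ℤ × ℤ × ℤ → ℂ := fun x => a1 x.1 * conj (a2 x.2.1) * a3 x.2.2
  have hinj₁ : Function.Injective fun r : ℤ => (p, r, r) := fun r r' h => by
    simpa using congrArg (·.2.1) h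
  have hinj₂ : Function.Injective fun r : ℤ => (r, r, p) := fun r r' h => by
    simpa using congrArg (·.1) h
  have hs₁ : HasSum ((Set.range fun r => (p, r, r)).indicator F)
      (a1 p * ∑' r, conj (a2 r) * a3 r) := by
    refine hasSum_subtype_iff_indicator.mp (hinj₁.hasSum_range_iff.mpr ?_)
    simpa only [F, Function.comp_def, mul_assoc] using h23.hasSum.mul_left (a1 p)
  have hs₂ : HasSum ((Set.range fun r => (r, r, p)).indicator F)
      ((∑' r, a1 r * conj (a2 r)) * a3 p) :=
    hasSum_subtype_iff_indicator.mp (hinj₂.hasSum_range_iff.mpr (h12.hasSum.mul_right (a3 p)))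
  have hs₃ := range_inter_range_eq_singleton p ▸ hasSum_subtype_iff_indicator.mp
    (hasSum_singleton ((p, p, p) : ℤ × ℤ × ℤ) F)
  exact (hasSum_subtype_iff_indicator.mpr
    (resonantFiber_eq_union p ▸ hs₁.indicator_union hs₂ hs₃)).tsum_eq

local notation "ℓ²" => lp (fun _ : ℤ => ℂ) 2

theorem memℓp_two_of_summable_sq {a : ℤ → ℂ} (h : Summable fun p => ‖a p‖ ^ 2) :
    Memℓp a 2 :=
  memℓp_gen (by simpa only [ENNReal.toReal_ofNat, Real.rpow_two] using h)

theorem l2norm_coe (A : ℓ²) : l2norm A = ‖A‖ := by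
  have h := lp.norm_rpow_eq_tsum (p := 2) (by norm_num) A
  simp only [ENNReal.toReal_ofNat, Real.rpow_two] at h
  rw [l2norm, ← h, Real.sqrt_sq (norm_nonneg A)]

theorem norm_mul_conj_mul_apply_le (A1 A2 A3 : ℓ²) (p : ℤ) :
    ‖A1 p * conj (A2 p) * A3 p‖ ≤ ‖A1‖ * ‖A2‖ * ‖A3 p‖ := by
  rw [norm_mul, norm_mul, RCLike.norm_conj]
  gcongr <;> exact lp.norm_apply_le_norm two_ne_zero _ p

noncomputable def diagProd (A1 A2 A3 : ℓ²) : ℓ² :=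
  ⟨fun p => A1 p * conj (A2 p) * A3 p,
    ((lp.memℓp A3).norm.const_mul (‖A1‖ * ‖A2‖)).mono (norm_mul_conj_mul_apply_le A1 A2 A3)⟩

theorem diagProd_apply (A1 A2 A3 : ℓ²) (p : ℤ) :
    diagProd A1 A2 A3 p = A1 p * conj (A2 p) * A3 p :=
  rfl

theorem norm_diagProd_le (A1 A2 A3 : ℓ²) : ‖diagProd A1 A2 A3‖ ≤ ‖A1‖ * ‖A2‖ * ‖A3‖ := by
  calc ‖diagProd A1 A2 A3‖ ≤ ‖(‖A1‖ * ‖A2‖) • A3‖ :=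
        lp.norm_mono two_ne_zero fun p => (norm_mul_conj_mul_apply_le A1 A2 A3 p).trans_eq <| by
          rw [lp.coeFn_smul, Pi.smul_apply, norm_smul, Real.norm_of_nonneg (by positivity)]
    _ = ‖A1‖ * ‖A2‖ * ‖A3‖ := by
      rw [norm_smul, Real.norm_of_nonneg (by positivity)]

noncomputable def resonant (A1 A2 A3 : ℓ²) : ℓ² :=
  ⟪A2, A3⟫_ℂ • A1 + ⟪A2, A1⟫_ℂ • A3 - diagProd A1 A2 A3

theorem coe_resonant (A1 A2 A3 : ℓ²) : ⇑(resonant A1 A2 A3) = Rop A1 A2 A3 := by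
  have h23 := lp.summable_inner (𝕜 := ℂ) A2 A3
  have h12 := lp.summable_inner (𝕜 := ℂ) A2 A1
  simp only [RCLike.inner_apply] at h23 h12
  funext p
  rw [Rop_eq (h23.congr fun r => mul_comm _ _) h12, resonant, lp.inner_eq_tsum, lp.inner_eq_tsum]
  simp only [RCLike.inner_apply, lp.coeFn_sub, lp.coeFn_add, lp.coeFn_smul, Pi.sub_apply,
    Pi.add_apply, Pi.smul_apply, smul_eq_mul, diagProd_apply, mul_comm (A3 _)]
  ring

theorem norm_resonant_le (A1 A2 A3 : ℓ²) :
    ‖resonant A1 A2 A3‖ ≤ 3 * (‖A1‖ * ‖A2‖ * ‖A3‖) :=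
  calc ‖resonant A1 A2 A3‖
      ≤ ‖⟪A2, A3⟫_ℂ‖ * ‖A1‖ + ‖⟪A2, A1⟫_ℂ‖ * ‖A3‖ + ‖diagProd A1 A2 A3‖ := by
        refine (norm_sub_le _ _).trans (add_le_add_left ((norm_add_le _ _).trans ?_) _)
        rw [norm_smul, norm_smul]
    _ ≤ ‖A2‖ * ‖A3‖ * ‖A1‖ + ‖A2‖ * ‖A1‖ * ‖A3‖ + ‖A1‖ * ‖A2‖ * ‖A3‖ := by
        gcongr
        exacts [norm_inner_le_norm A2 A3, norm_inner_le_norm A2 A1, norm_diagProd_le A1 A2 A3]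
    _ = 3 * (‖A1‖ * ‖A2‖ * ‖A3‖) := by ring

theorem l2norm_Rop_le (A1 A2 A3 : ℓ²) :
    l2norm (Rop A1 A2 A3) ≤ 3 * (l2norm A1 * l2norm A2 * l2norm A3) := by
  simpa only [← coe_resonant, l2norm_coe] using norm_resonant_le A1 A2 A3

theorem mul_mul_le_min_mul_mul {x y z X Y Z : ℝ} (hx : 0 ≤ x) (hy : 0 ≤ y) (hz : 0 ≤ z)
    (hX : x ≤ X) (hY : y ≤ Y) (hZ : z ≤ Z) :
    x * y * z ≤ min (min (x * Y * Z) (y * X * Z)) (z * X * Y) := by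
  have hX₀ := hx.trans hX
  have hY₀ := hy.trans hY
  refine le_min (le_min ?_ ?_) ?_
  · gcongr
  · rw [mul_comm x]
    gcongr
  · rw [mul_rotate, mul_rotate]
    gcongr

theorem norm_sq_le_one_add_sq_mul (p : ℤ) (z : ℂ) : ‖z‖ ^ 2 ≤ (1 + (p : ℝ) ^ 2) * ‖z‖ ^ 2 :=
  le_mul_of_one_le_left (by positivity) (le_add_of_nonneg_right (sq_nonneg _))

section WeightedSummable

variable {a : ℤ → ℂ} (h : Summable fun p : ℤ => (1 + (p : ℝ) ^ 2) * ‖a p‖ ^ 2)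
include h

theorem summable_sq_of_summable_weighted : Summable fun p => ‖a p‖ ^ 2 :=
  h.of_nonneg_of_le (fun p => by positivity) fun p => norm_sq_le_one_add_sq_mul p (a p)

theorem l2norm_le_h1norm : l2norm a ≤ h1norm a :=
  Real.sqrt_le_sqrt <| (summable_sq_of_summable_weighted h).tsum_le_tsum
    (fun p => norm_sq_le_one_add_sq_mul p (a p)) h

end WeightedSummable

theorem stmt_3 :
    ∃ C > 0, ∀ a1 a2 a3 : ℤ → ℂ,
      Summable (fun p : ℤ => (1 + (p : ℝ) ^ 2) * ‖a1 p‖ ^ 2) →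
      Summable (fun p : ℤ => (1 + (p : ℝ) ^ 2) * ‖a2 p‖ ^ 2) →
      Summable (fun p : ℤ => (1 + (p : ℝ) ^ 2) * ‖a3 p‖ ^ 2) →
      l2norm (Rop a1 a2 a3) ≤
        C * min (min (l2norm a1 * h1norm a2 * h1norm a3)
                     (l2norm a2 * h1norm a1 * h1norm a3))
                (l2norm a3 * h1norm a1 * h1norm a2) := by
  refine ⟨3, by norm_num, fun a1 a2 a3 hw1 hw2 hw3 => ?_⟩
  have hR := l2norm_Rop_le
    ⟨a1, memℓp_two_of_summable_sq (summable_sq_of_summable_weighted hw1)⟩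
    ⟨a2, memℓp_two_of_summable_sq (summable_sq_of_summable_weighted hw2)⟩
    ⟨a3, memℓp_two_of_summable_sq (summable_sq_of_summable_weighted hw3)⟩
  refine hR.trans (mul_le_mul_of_nonneg_left (mul_mul_le_min_mul_mul (Real.sqrt_nonneg _)
    (Real.sqrt_nonneg _) (Real.sqrt_nonneg _) (l2norm_le_h1norm hw1) (l2norm_le_h1norm hw2)
    (l2norm_le_h1norm hw3)) (by norm_num))
end

section
/- Let a, b: ℤ → ℂ be in h¹ and define the reduced resonant nonlinearity R(a,a,b)_p = Σ_{(p,q,r,s)∈Γ₀} a_q · conj(a_r) · b_s. Then Re⟨i·R(b,b,a), a⟩_{ℓ²} + Re⟨i·R(a,a,b), b⟩_{ℓ²} = 0, i.e., Σ_{(p,q,r,s)∈Γ₀} Im(conj(a_p) b_q conj(b_r) a_s + conj(b_p) a_q conj(a_r) b_s) = 0. -/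
open scoped ComplexConjugate

theorem stmt_6 (a b : ℤ → ℂ)
    (ha : Summable (fun p : ℤ => (1 + (p : ℝ) ^ 2) * ‖a p‖ ^ 2))
    (hb : Summable (fun p : ℤ => (1 + (p : ℝ) ^ 2) * ‖b p‖ ^ 2)) :
    (∑' x : {x : ℤ × ℤ × ℤ × ℤ // ({x.1, x.2.2.1} : Set ℤ) = {x.2.1, x.2.2.2}},
        Complex.im
          (conj (a x.val.1) * b x.val.2.1 * conj (b x.val.2.2.1) * a x.val.2.2.2 +
           conj (b x.val.1) * a x.val.2.1 * conj (a x.val.2.2.1) * b x.val.2.2.2)) = 0 := by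
  set T := {x : ℤ × ℤ × ℤ × ℤ // ({x.1, x.2.2.1} : Set ℤ) = {x.2.1, x.2.2.2}} with hT
  set f : T → ℝ := fun x =>
    Complex.im
      (conj (a x.val.1) * b x.val.2.1 * conj (b x.val.2.2.1) * a x.val.2.2.2 +
       conj (b x.val.1) * a x.val.2.1 * conj (a x.val.2.2.1) * b x.val.2.2.2) with hf
  let e : T ≃ T :=
    { toFun := fun x => ⟨(x.val.2.1, x.val.1, x.val.2.2.2, x.val.2.2.1), x.prop.symm⟩
      invFun := fun x => ⟨(x.val.2.1, x.val.1, x.val.2.2.2, x.val.2.2.1), x.prop.symm⟩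
      left_inv := fun x => rfl
      right_inv := fun x => rfl }
  have key : ∀ x : T, f (e x) = - f x := by
    intro x
    have hconj :
        conj (a x.val.2.1) * b x.val.1 * conj (b x.val.2.2.2) * a x.val.2.2.1 +
          conj (b x.val.2.1) * a x.val.1 * conj (a x.val.2.2.2) * b x.val.2.2.1 =
        conj (conj (a x.val.1) * b x.val.2.1 * conj (b x.val.2.2.1) * a x.val.2.2.2 +
          conj (b x.val.1) * a x.val.2.1 * conj (a x.val.2.2.1) * b x.val.2.2.2) := by
      simp only [map_add, map_mul, Complex.conj_conj]
      ring
    simp only [f, e, Equiv.coe_fn_mk, hconj, Complex.conj_im]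
  have h1 : (∑' x : T, f x) = ∑' x : T, f (e x) := (e.tsum_eq f).symm
  have h2 : (∑' x : T, f (e x)) = - ∑' x : T, f x := by
    simp only [key]
    exact tsum_neg
  have := h1.trans h2
  linarith
end

section
/- Let (a, b) be a C¹ solution on an interval of the reduced resonant system i∂ₜa_p = Σ_{(p,q,r,s)∈Γ₀} b_q conj(b_r) a_s, i∂ₜb_p = Σ_{(p,q,r,s)∈Γ₀} a_q conj(a_r) b_s, with values in h^σ (σ ≥ 1, absolutely summable sums). Then for each fixed n ∈ ℤ, the quantity |a_n(t)|² + |b_n(t)|² is constant in time. -/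
/-!
Since `{p, r} = {q, s}` forces `(q, r, s) = (p, r, r)` or `(q, r, s) = (r, r, p)` with `r ≠ p`,
the resonant sum splits as `R(g, g, f)_p = g_p S(g, f) + (∑_{r ≠ p} |g_r|²) f_p` with
`S(g, f) = ∑_r conj(g_r) f_r`. Along the flow
`∂ₜ(|a_n|² + |b_n|²) = 2 Im(R(b, b, a)_n conj(a_n) + R(a, a, b)_n conj(b_n))`, and by the splitting
the quantity inside is `w + conj w` plus real terms, with `w = conj(a_n) b_n S(b, a)`.
-/

open scoped ComplexConjugate

lemma summable_mul_of_summable_sq {ι R : Type*} [NormedRing R] [CompleteSpace R] {u v : ι → R}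
    (hu : Summable fun i => ‖u i‖ ^ 2) (hv : Summable fun i => ‖v i‖ ^ 2) :
    Summable fun i => u i * v i := by
  refine Summable.of_norm_bounded (hu.add hv) fun i => ?_
  nlinarith [norm_mul_le (u i) (v i), norm_nonneg (u i), norm_nonneg (v i),
    sq_nonneg (‖u i‖ - ‖v i‖)]

lemma summable_of_summable_one_add_sq_rpow_mul {σ : ℝ} (hσ : 0 ≤ σ) {c : ℤ → ℝ}
    (hc : ∀ p, 0 ≤ c p) (h : Summable fun p : ℤ => (1 + (p : ℝ) ^ 2) ^ σ * c p) :
    Summable c := by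
  refine Summable.of_nonneg_of_le hc (fun p => ?_) h
  have : (1 : ℝ) ≤ (1 + (p : ℝ) ^ 2) ^ σ :=
    Real.one_le_rpow (le_add_of_nonneg_right (sq_nonneg _)) hσ
  nlinarith [hc p]

lemma resonant_set_eq_union (p : ℤ) :
    {x : ℤ × ℤ × ℤ | ({p, x.2.1} : Set ℤ) = {x.1, x.2.2}}
      = Set.range (fun r => (p, r, r)) ∪ (fun r => (r, r, p)) '' {r | r ≠ p} := by
  ext ⟨q, r, s⟩
  simp only [Set.mem_ofPred_eq, Set.pair_eq_pair_iff, Set.mem_union, Set.mem_range,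
    Set.mem_image, Prod.mk.injEq]
  constructor
  · rintro (⟨rfl, rfl⟩ | ⟨rfl, rfl⟩)
    · exact Or.inl ⟨r, rfl, rfl, rfl⟩
    · by_cases hrp : r = p
      · subst hrp; exact Or.inl ⟨r, rfl, rfl, rfl⟩
      · exact Or.inr ⟨r, hrp, rfl, rfl, rfl⟩
  · rintro (⟨r', rfl, rfl, rfl⟩ | ⟨r', -, rfl, rfl, rfl⟩)
    · exact Or.inl ⟨rfl, rfl⟩
    · exact Or.inr ⟨rfl, rfl⟩

lemma disjoint_range_image_ne (p : ℤ) :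
    Disjoint (Set.range (fun r : ℤ => (p, r, r))) ((fun r => (r, r, p)) '' {r | r ≠ p}) := by
  rw [Set.disjoint_left]
  rintro _ ⟨r, rfl⟩ ⟨r', hr', hx⟩
  exact hr' (congrArg Prod.fst hx)

lemma Rop_eq_add (f g h : ℤ → ℂ) (p : ℤ)
    (hgh : Summable fun r => conj (g r) * h r) (hfg : Summable fun r => f r * conj (g r)) :
    Rop f g h p = f p * (∑' r, conj (g r) * h r)
      + (∑' r : {r : ℤ // r ≠ p}, f r * conj (g r)) * h p := by
  let F : ℤ × ℤ × ℤ → ℂ := fun x => f x.1 * conj (g x.2.1) * h x.2.2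
  let u : ℤ → ℤ × ℤ × ℤ := fun r => (p, r, r)
  let v : ℤ → ℤ × ℤ × ℤ := fun r => (r, r, p)
  have hu : Function.Injective u := fun r r' hr => congrArg (·.2.1) hr
  have hv : Function.Injective v := fun r r' hr => congrArg Prod.fst hr
  have hFu : F ∘ u = fun r => f p * (conj (g r) * h r) := by
    funext r; exact mul_assoc _ _ _
  have hFv : (fun r : {r : ℤ | r ≠ p} => F (v r)) =
      fun r : {r : ℤ | r ≠ p} => f r * conj (g r) * h p := rfl
  have hA : Summable (F ∘ (↑) : Set.range u → ℂ) := by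
    rw [← (Equiv.ofInjective u hu).summable_iff]
    exact hFu ▸ hgh.mul_left (f p)
  have hB : Summable (F ∘ (↑) : v '' {r | r ≠ p} → ℂ) := by
    rw [← (Equiv.Set.imageOfInjOn v _ hv.injOn).summable_iff]
    exact (hfg.subtype _).mul_right (h p)
  change ∑' x : {x : ℤ × ℤ × ℤ | ({p, x.2.1} : Set ℤ) = {x.1, x.2.2}}, F x = _
  rw [resonant_set_eq_union, Summable.tsum_union_disjoint (disjoint_range_image_ne p) hA hB,
    tsum_range F hu, tsum_image F hv.injOn, hFv, tsum_mul_right]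
  rw [show (fun r => F (u r)) = F ∘ u from rfl, hFu, tsum_mul_left]
  rfl

lemma im_Rop_mul_conj_add_eq_zero {f g : ℤ → ℂ} (hf : Summable fun p => ‖f p‖ ^ 2)
    (hg : Summable fun p => ‖g p‖ ^ 2) (n : ℤ) :
    (Rop g g f n * conj (f n) + Rop f f g n * conj (g n)).im = 0 := by
  have hsq {u : ℤ → ℂ} (hu : Summable fun p => ‖u p‖ ^ 2) :
      Summable fun p => ‖conj (u p)‖ ^ 2 := by simpa using hu
  rw [Rop_eq_add g g f n (summable_mul_of_summable_sq (hsq hg) hf)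
      (summable_mul_of_summable_sq hg (hsq hg)),
    Rop_eq_add f f g n (summable_mul_of_summable_sq (hsq hf) hg)
      (summable_mul_of_summable_sq hf (hsq hf)),
    ← Complex.conj_eq_iff_im]
  simp only [map_add, map_mul, Complex.conj_conj, Complex.conj_tsum, mul_comm]
  ring

lemma inner_neg_I_mul (w z : ℂ) : inner ℝ w (-Complex.I * z) = (z * conj w).im := by
  simp [Complex.inner, Complex.mul_re, Complex.mul_im]

lemma Set.OrdConnected.eq_of_forall_hasDerivAt_zero {F : Type*} [NormedAddCommGroup F]
    [NormedSpace ℝ F] {I : Set ℝ} (hI : I.OrdConnected) {E : ℝ → F}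
    (hE : ∀ t ∈ I, HasDerivAt E 0 t) {t₁ t₂ : ℝ} (ht₁ : t₁ ∈ I) (ht₂ : t₂ ∈ I) :
    E t₁ = E t₂ := by
  have := hI.convex.norm_image_sub_le_of_norm_hasDerivWithin_le
    (fun t ht => (hE t ht).hasDerivWithinAt) (fun _ _ => norm_zero.le) ht₁ ht₂
  rw [zero_mul, norm_le_zero_iff, sub_eq_zero] at this
  exact this.symm

/-- For a `C¹` solution `(a,b)` of the reduced resonant system
`i∂ₜa = R(b,b,a)`, `i∂ₜb = R(a,a,b)` with values in `h^σ`, `σ ≥ 1`,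
each quantity `|a_n(t)|² + |b_n(t)|²` is constant in time. -/
theorem stmt_7 (σ : ℝ) (hσ : 1 ≤ σ) (I : Set ℝ) (hI : I ∈ {S : Set ℝ | S.OrdConnected})
    (a b : ℝ → ℤ → ℂ)
    (hsum : ∀ t ∈ I, Summable (fun p : ℤ =>
      (1 + (p : ℝ) ^ 2) ^ σ * (‖a t p‖ ^ 2 + ‖b t p‖ ^ 2)))
    (ha : ∀ t ∈ I, ∀ p : ℤ,
      HasDerivAt (fun s => a s p) (-Complex.I * Rop (b t) (b t) (a t) p) t)
    (hb : ∀ t ∈ I, ∀ p : ℤ,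
      HasDerivAt (fun s => b s p) (-Complex.I * Rop (a t) (a t) (b t) p) t)
    (n : ℤ) (t₁ t₂ : ℝ) (ht₁ : t₁ ∈ I) (ht₂ : t₂ ∈ I) :
    ‖a t₁ n‖ ^ 2 + ‖b t₁ n‖ ^ 2 = ‖a t₂ n‖ ^ 2 + ‖b t₂ n‖ ^ 2 := by
  refine Set.OrdConnected.eq_of_forall_hasDerivAt_zero (E := fun t => ‖a t n‖ ^ 2 + ‖b t n‖ ^ 2)
    hI (fun t ht => ?_) ht₁ ht₂
  have hℓ2 := summable_of_summable_one_add_sq_rpow_mul (by linarith) (fun p => by positivity)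
    (hsum t ht)
  have hat : Summable fun p => ‖a t p‖ ^ 2 :=
    hℓ2.of_nonneg_of_le (fun p => by positivity) fun p => by nlinarith [sq_nonneg ‖b t p‖]
  have hbt : Summable fun p => ‖b t p‖ ^ 2 :=
    hℓ2.of_nonneg_of_le (fun p => by positivity) fun p => by nlinarith [sq_nonneg ‖a t p‖]
  have hderiv : HasDerivAt (fun t => ‖a t n‖ ^ 2 + ‖b t n‖ ^ 2)
      (2 * (Rop (b t) (b t) (a t) n * conj (a t n) + Rop (a t) (a t) (b t) n * conj (b t n)).im)
      t := by
    simpa only [inner_neg_I_mul, Complex.add_im, mul_add]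
      using (ha t ht n).norm_sq.fun_add (hb t ht n).norm_sq
  rwa [im_Rop_mul_conj_add_eq_zero hat hbt n, mul_zero] at hderiv
end

section
/- Let (a, b) be a solution of the reduced resonant system i∂ₜa = R(b,b,a), i∂ₜb = R(a,a,b). Then for every σ ∈ ℝ the quantity ‖a(t)‖²_{h^σ} + ‖b(t)‖²_{h^σ} is constant in time. -/
/-!
For fixed `p`, the resonant set `{(q, r, s) : {p, r} = {q, s}}` is the union of the lines
`(p, r, r)` and `(q, q, p)`, so `R(f, g, h)_p = f_p ∑_r conj g_r h_r + h_p ∑_{q ≠ p} f_q conj g_q`.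
Hence `conj a_p R(b, b, a)_p + conj b_p R(a, a, b)_p` has the form `w + conj w` plus real terms,
and is real. Since `d/dt |a_p|² = 2 Im (conj a_p R(b, b, a)_p)`, every mode energy
`|a_p|² + |b_p|²` is conserved, and so is each weighted sum of them.
-/

open scoped ComplexConjugate

/-- The common point `(p, p, p)` of the two lines goes to the line `(p, r, r)`. -/
def resonantSetEquiv (p : ℤ) :
    {x : ℤ × ℤ × ℤ // ({p, x.2.1} : Set ℤ) = {x.1, x.2.2}} ≃ ℤ ⊕ {q : ℤ // q ≠ p} where
  toFun x := if h : x.val.1 = p then .inl x.val.2.1 else .inr ⟨x.val.1, h⟩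
  invFun := Sum.elim (fun r => ⟨(p, r, r), rfl⟩) (fun q => ⟨(q, q, p), Set.pair_comm _ _⟩)
  left_inv := by
    rintro ⟨⟨q, r, s⟩, hx⟩
    obtain ⟨rfl, hs⟩ | ⟨rfl, hq⟩ := Set.pair_eq_pair_iff.mp hx <;> dsimp only at *
    · subst hs; simp
    · subst hq; by_cases hr : r = p <;> simp [hr]
  right_inv := by
    rintro (r | ⟨q, hq⟩)
    · simp
    · simp [hq]

lemma summable_mul_of_summable_norm_sq {ι R : Type*} [NormedRing R] [CompleteSpace R]
    {u v : ι → R} (hu : Summable fun n => ‖u n‖ ^ 2) (hv : Summable fun n => ‖v n‖ ^ 2) :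
    Summable fun n => u n * v n := by
  refine Summable.of_norm_bounded ((hu.add hv).div_const 2) fun n => ?_
  have := two_mul_le_add_sq ‖u n‖ ‖v n‖
  calc ‖u n * v n‖ ≤ ‖u n‖ * ‖v n‖ := norm_mul_le _ _
    _ ≤ (‖u n‖ ^ 2 + ‖v n‖ ^ 2) / 2 := by linarith

lemma Rop_eq_s8 (f g h : ℤ → ℂ) (p : ℤ) (hgh : Summable fun r => conj (g r) * h r)
    (hfg : Summable fun q => f q * conj (g q)) :
    Rop f g h p = f p * ∑' r, conj (g r) * h r + h p * ∑' q : {q // q ≠ p}, f q * conj (g q) := by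
  rw [Rop, ← (resonantSetEquiv p).symm.tsum_eq, Summable.tsum_sum, ← tsum_mul_left,
    ← tsum_mul_left]
  · congr 1
    · exact tsum_congr fun _ => mul_assoc _ _ _
    · exact tsum_congr fun _ => mul_comm _ _
  · exact (hgh.mul_left (f p)).congr fun _ => (mul_assoc _ _ _).symm
  · exact ((hfg.subtype _).mul_left (h p)).congr fun _ => mul_comm _ _

lemma im_conj_mul_Rop_add_eq_zero (A B : ℤ → ℂ) (p : ℤ)
    (hA : Summable fun n => ‖A n‖ ^ 2) (hB : Summable fun n => ‖B n‖ ^ 2) :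
    (conj (A p) * Rop B B A p + conj (B p) * Rop A A B p).im = 0 := by
  have hA' : Summable fun n => ‖conj (A n)‖ ^ 2 := by simpa using hA
  have hB' : Summable fun n => ‖conj (B n)‖ ^ 2 := by simpa using hB
  rw [Rop_eq_s8 _ _ _ _ (summable_mul_of_summable_norm_sq hB' hA)
      (summable_mul_of_summable_norm_sq hB hB'),
    Rop_eq_s8 _ _ _ _ (summable_mul_of_summable_norm_sq hA' hB)
      (summable_mul_of_summable_norm_sq hA hA')]
  have hswap : ∑' r, conj (A r) * B r = conj (∑' r, conj (B r) * A r) := by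
    simp [Complex.conj_tsum, mul_comm]
  have hreal (C : ℤ → ℂ) : conj (∑' q : {q // q ≠ p}, C q * conj (C q))
      = ∑' q : {q // q ≠ p}, C q * conj (C q) := by
    simp [Complex.conj_tsum, mul_comm]
  rw [← Complex.conj_eq_iff_im, hswap]
  simp only [map_add, map_mul, Complex.conj_conj, hreal]
  ring

lemma norm_sq_add_norm_sq_eq_of_resonant (a b : ℝ → ℤ → ℂ)
    (hla : ∀ t, Summable fun n => ‖a t n‖ ^ 2) (hlb : ∀ t, Summable fun n => ‖b t n‖ ^ 2)
    (ha : ∀ t p, HasDerivAt (fun s => a s p) (-Complex.I * Rop (b t) (b t) (a t) p) t)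
    (hb : ∀ t p, HasDerivAt (fun s => b s p) (-Complex.I * Rop (a t) (a t) (b t) p) t)
    (p : ℤ) (t₁ t₂ : ℝ) :
    ‖a t₁ p‖ ^ 2 + ‖b t₁ p‖ ^ 2 = ‖a t₂ p‖ ^ 2 + ‖b t₂ p‖ ^ 2 := by
  have hderiv (t : ℝ) : HasDerivAt (fun s => ‖a s p‖ ^ 2 + ‖b s p‖ ^ 2) 0 t := by
    have him := im_conj_mul_Rop_add_eq_zero (a t) (b t) p (hla t) (hlb t)
    refine ((ha t p).norm_sq.add (hb t p).norm_sq).congr_deriv ?_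
    simp only [Complex.inner, Complex.add_im, Complex.mul_re, Complex.mul_im,
      Complex.neg_re, Complex.neg_im, Complex.I_re, Complex.I_im, Complex.conj_re,
      Complex.conj_im] at him ⊢
    linarith
  exact is_const_of_deriv_eq_zero (fun t => (hderiv t).differentiableAt)
    (fun t => (hderiv t).deriv) t₁ t₂

lemma summable_mul_left_of_summable_mul_add {ι : Type*} {w x y : ι → ℝ}
    (hw : ∀ i, 0 ≤ w i) (hx : ∀ i, 0 ≤ x i) (hy : ∀ i, 0 ≤ y i)
    (h : Summable fun i => w i * (x i + y i)) : Summable fun i => w i * x i :=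
  h.of_nonneg_of_le (fun i => mul_nonneg (hw i) (hx i))
    fun i => mul_le_mul_of_nonneg_left (le_add_of_nonneg_right (hy i)) (hw i)

lemma tsum_mul_add_tsum_mul {ι : Type*} {w x y : ι → ℝ}
    (hw : ∀ i, 0 ≤ w i) (hx : ∀ i, 0 ≤ x i) (hy : ∀ i, 0 ≤ y i)
    (h : Summable fun i => w i * (x i + y i)) :
    ∑' i, w i * x i + ∑' i, w i * y i = ∑' i, w i * (x i + y i) := by
  have h' : Summable fun i => w i * (y i + x i) := by simpa only [add_comm] using h
  simp only [mul_add]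
  exact (Summable.tsum_add (summable_mul_left_of_summable_mul_add hw hx hy h)
    (summable_mul_left_of_summable_mul_add hw hy hx h')).symm

/-- Along a solution of the reduced resonant system `i∂ₜa = R(b,b,a)`,
`i∂ₜb = R(a,a,b)`, for every `σ ∈ ℝ` the quantity `‖a(t)‖²_{h^σ} + ‖b(t)‖²_{h^σ}`
is constant in time. -/
theorem stmt_8 (a b : ℝ → ℤ → ℂ)
    (hsum : ∀ σ : ℝ, ∀ t : ℝ, Summable (fun p : ℤ =>
      (1 + (p : ℝ) ^ 2) ^ σ * (‖a t p‖ ^ 2 + ‖b t p‖ ^ 2)))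
    (ha : ∀ t : ℝ, ∀ p : ℤ,
      HasDerivAt (fun s => a s p) (-Complex.I * Rop (b t) (b t) (a t) p) t)
    (hb : ∀ t : ℝ, ∀ p : ℤ,
      HasDerivAt (fun s => b s p) (-Complex.I * Rop (a t) (a t) (b t) p) t) :
    ∀ σ : ℝ, ∀ t₁ t₂ : ℝ,
      ((∑' p : ℤ, (1 + (p : ℝ) ^ 2) ^ σ * ‖a t₁ p‖ ^ 2) +
        ∑' p : ℤ, (1 + (p : ℝ) ^ 2) ^ σ * ‖b t₁ p‖ ^ 2) =
      ((∑' p : ℤ, (1 + (p : ℝ) ^ 2) ^ σ * ‖a t₂ p‖ ^ 2) +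
        ∑' p : ℤ, (1 + (p : ℝ) ^ 2) ^ σ * ‖b t₂ p‖ ^ 2) := by
  intro σ t₁ t₂
  have hw (p : ℤ) : 0 ≤ (1 + (p : ℝ) ^ 2) ^ σ := by positivity
  have hsq (c : ℂ) : 0 ≤ ‖c‖ ^ 2 := by positivity
  have hl2 (t : ℝ) : Summable fun p => ‖a t p‖ ^ 2 + ‖b t p‖ ^ 2 := by
    simpa only [Real.rpow_zero, one_mul] using hsum 0 t
  have hla (t : ℝ) : Summable fun p => ‖a t p‖ ^ 2 :=
    (hl2 t).of_nonneg_of_le (fun _ => hsq _) fun _ => le_add_of_nonneg_right (hsq _)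
  have hlb (t : ℝ) : Summable fun p => ‖b t p‖ ^ 2 :=
    (hl2 t).of_nonneg_of_le (fun _ => hsq _) fun _ => le_add_of_nonneg_left (hsq _)
  rw [tsum_mul_add_tsum_mul hw (fun _ => hsq _) (fun _ => hsq _) (hsum σ t₁),
    tsum_mul_add_tsum_mul hw (fun _ => hsq _) (fun _ => hsq _) (hsum σ t₂)]
  exact tsum_congr fun p => by
    rw [norm_sq_add_norm_sq_eq_of_resonant a b hla hlb ha hb p t₁ t₂]
end

section
/- Along solutions of the system Ψ' = 2(2K−1)cos(Ψ), K' = 2K(K−1)sin(Ψ) with initial data Ψ(0) = 0, K(0) = γ for 0 < γ < 1/2, the value K(t) stays in the open interval (0, 1) for all time where the solution exists: indeed the conserved quantity H⋆ = 2K(1−K)cos(Ψ) equals 2γ(1−γ) > 0, and 2K(1−K) ≥ 2K(1−K)cos(Ψ) = 2γ(1−γ) implies γ ≤ K(t) ≤ 1 − γ. -/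
/-!
`H⋆ = 2K(1−K)cos Ψ` is a first integral, so `K(1−K)cos Ψ = γ(1−γ) > 0` for all time. Hence
`K(1−K)` never vanishes, stays positive by continuity, and `cos Ψ ≤ 1` gives
`K(1−K) ≥ γ(1−γ)`, which for `γ ≤ 1/2` confines `K` to `[γ, 1−γ]`.
-/

open Real

theorem pos_of_forall_ne_zero {X : Type*} [TopologicalSpace X] [PreconnectedSpace X]
    {f : X → ℝ} (hf : Continuous f) (hne : ∀ x, f x ≠ 0) {a : X} (ha : 0 < f a) (x : X) :
    0 < f x := by
  by_contra! hx
  obtain ⟨y, hy⟩ := intermediate_value_univ x a hf ⟨hx, ha.le⟩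
  exact hne y hy

theorem le_and_le_one_sub_of_mul_one_sub_le {γ x : ℝ} (hγ : γ ≤ 1 / 2)
    (h : γ * (1 - γ) ≤ x * (1 - x)) : γ ≤ x ∧ x ≤ 1 - γ := by
  have hprod : 0 ≤ (x - γ) * (1 - γ - x) := by nlinarith
  constructor <;> nlinarith

noncomputable def hamiltonian (Ψ K : ℝ → ℝ) (t : ℝ) : ℝ := 2 * K t * (1 - K t) * cos (Ψ t)

section Flow

variable {Ψ K : ℝ → ℝ}

theorem hasDerivAt_hamiltonian
    (hΨ : ∀ t : ℝ, HasDerivAt Ψ (2 * (2 * K t - 1) * cos (Ψ t)) t)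
    (hK : ∀ t : ℝ, HasDerivAt K (2 * K t * (K t - 1) * sin (Ψ t)) t) (t : ℝ) :
    HasDerivAt (hamiltonian Ψ K) 0 t := by
  have hcos := (hasDerivAt_cos (Ψ t)).comp t (hΨ t)
  have hKK := ((hK t).const_mul 2).mul ((hK t).const_sub 1)
  refine (hKK.mul hcos).congr_deriv ?_
  simp only [Function.comp_apply, Pi.mul_apply]
  ring

theorem hamiltonian_eq_hamiltonian_zero
    (hΨ : ∀ t : ℝ, HasDerivAt Ψ (2 * (2 * K t - 1) * cos (Ψ t)) t)
    (hK : ∀ t : ℝ, HasDerivAt K (2 * K t * (K t - 1) * sin (Ψ t)) t) (t : ℝ) :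
    hamiltonian Ψ K t = hamiltonian Ψ K 0 :=
  is_const_of_deriv_eq_zero (fun s => (hasDerivAt_hamiltonian hΨ hK s).differentiableAt)
    (fun s => (hasDerivAt_hamiltonian hΨ hK s).deriv) t 0

end Flow

/-- Along solutions of `Ψ' = 2(2K−1)cos Ψ`, `K' = 2K(K−1)sin Ψ` with
`Ψ(0) = 0`, `K(0) = γ`, `0 < γ < 1/2`, one has `γ ≤ K(t) ≤ 1 − γ` for all `t`;
in particular `K(t)` stays in the open interval `(0,1)`. -/
theorem stmt_15 (γ : ℝ) (hγ0 : 0 < γ) (hγ : γ < 1 / 2) (Ψ K : ℝ → ℝ)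
    (hΨ : ∀ t : ℝ, HasDerivAt Ψ (2 * (2 * K t - 1) * Real.cos (Ψ t)) t)
    (hK : ∀ t : ℝ, HasDerivAt K (2 * K t * (K t - 1) * Real.sin (Ψ t)) t)
    (hΨ0 : Ψ 0 = 0) (hK0 : K 0 = γ) :
    ∀ t : ℝ, γ ≤ K t ∧ K t ≤ 1 - γ ∧ 0 < K t ∧ K t < 1 := by
  have hγγ : 0 < γ * (1 - γ) := by nlinarith
  have hconst (t : ℝ) : K t * (1 - K t) * cos (Ψ t) = γ * (1 - γ) := by
    have h := hamiltonian_eq_hamiltonian_zero hΨ hK t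
    simp only [hamiltonian, hΨ0, hK0, cos_zero] at h
    linarith
  have hKcont : Continuous K := continuous_iff_continuousAt.2 fun t => (hK t).continuousAt
  have hpos : ∀ t, 0 < K t * (1 - K t) :=
    pos_of_forall_ne_zero (hKcont.mul (continuous_const.sub hKcont))
      (fun t h0 => by have := hconst t; rw [h0, zero_mul] at this; linarith)
      (a := 0) (by rw [hK0]; exact hγγ)
  intro t
  have hle : γ * (1 - γ) ≤ K t * (1 - K t) := by
    rw [← hconst t]
    exact mul_le_of_le_one_right (hpos t).le (cos_le_one _)
  obtain ⟨h1, h2⟩ := le_and_le_one_sub_of_mul_one_sub_le hγ.le hle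
  exact ⟨h1, h2, by linarith, by linarith⟩
end
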